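/- (Key merging inequality.) Let P and Q be disjoint nonempty coalitions, and let j ∈ P ∪ Q be a player whose number of samples n_j is maximal among all players of P ∪ Q, with P ∪ Q containing at least two players. Then costw(Q) + costw(P) ≥ costw((Q ∪ P) \ {j}) + costw({j}), i.e., merging the two groups and removing a largest player to local learning does not increase total cost. -/

import Mathlib

/-!
Write `S(C) = ∑ n_i` and `ρ(C) = ∑ n_i² / ∑ n_i` (the size-biased mean of the sample counts).
Since `err_j(C)` depends on `j` only through `n_j`, summing gives
`costw(C) = μ + σ² (S(C) - ρ(C))`. As `S` is additive and `S({j}) = ρ({j}) = n_j`, the claim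
becomes `ρ(Q) + ρ(P) ≤ n_j + ρ((Q ∪ P) \ {j})` for `j ∈ P`. Here `ρ((Q ∪ P) \ {j})` is the mediant
of `ρ(Q)` and `ρ(P \ {j})`, and the inequality follows from `n_i ≤ n_j` on `P ∪ Q` together with
`ρ(Q) ≤ S(Q)`, by cases on whether `n_j ≤ S(Q)`.
-/

open Finset

variable {ι : Type*}

/-- The expected error of player `j` in coalition `C`. -/
noncomputable def err [DecidableEq ι] (μ σ2 : ℝ) (n : ι → ℕ) (C : Finset ι) (j : ι) : ℝ :=
  μ / (∑ i ∈ C, (n i : ℝ)) +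
    σ2 * ((∑ i ∈ C.erase j, (n i : ℝ) ^ 2) + (∑ i ∈ C.erase j, (n i : ℝ)) ^ 2) /
      (∑ i ∈ C, (n i : ℝ)) ^ 2

/-- The weighted cost of a coalition `C`. -/
noncomputable def costw [DecidableEq ι] (μ σ2 : ℝ) (n : ι → ℕ) (C : Finset ι) : ℝ :=
  ∑ j ∈ C, (n j : ℝ) * err μ σ2 n C j

theorem costw_eq [DecidableEq ι] (μ σ2 : ℝ) (n : ι → ℕ) {C : Finset ι}
    (hC : ∑ i ∈ C, (n i : ℝ) ≠ 0) :
    costw μ σ2 n C =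
      μ + σ2 * (∑ i ∈ C, (n i : ℝ) - (∑ i ∈ C, (n i : ℝ) ^ 2) / ∑ i ∈ C, (n i : ℝ)) := by
  set S := ∑ i ∈ C, (n i : ℝ) with hS
  set T := ∑ i ∈ C, (n i : ℝ) ^ 2 with hT
  have hterm : ∀ j ∈ C, (n j : ℝ) * err μ σ2 n C j =
      (μ / S + σ2 * (T + S ^ 2) / S ^ 2) * n j - 2 * σ2 / S * (n j : ℝ) ^ 2 := by
    intro j hj
    rw [err, sum_erase_eq_sub hj, sum_erase_eq_sub hj, ← hS, ← hT]
    field_simp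
    ring
  rw [costw, sum_congr rfl hterm, sum_sub_distrib, ← mul_sum, ← mul_sum]
  field_simp
  ring

theorem costw_singleton [DecidableEq ι] (μ σ2 : ℝ) {n : ι → ℕ} {j : ι} (hj : 0 < n j) :
    costw μ σ2 n {j} = μ := by
  have hj' : (n j : ℝ) ≠ 0 := by positivity
  rw [costw_eq μ σ2 n (by rwa [sum_singleton]), sum_singleton, sum_singleton, sq,
    mul_div_cancel_right₀ _ hj', sub_self, mul_zero, add_zero]

theorem sum_sq_le_mul_sum {s : Finset ι} {f : ι → ℝ} {M : ℝ} (h0 : ∀ i ∈ s, 0 ≤ f i)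
    (hM : ∀ i ∈ s, f i ≤ M) : ∑ i ∈ s, f i ^ 2 ≤ M * ∑ i ∈ s, f i := by
  rw [mul_sum]
  exact sum_le_sum fun i hi => by rw [sq]; exact mul_le_mul_of_nonneg_right (hM i hi) (h0 i hi)

/- In the application `b, B` are `∑ n_i, ∑ n_i²` over `Q`, `a, A` the same over `P \ {j}`, and
`m = n_j`: the three fractions are the size-biased means of `Q`, `P` and `(Q ∪ P) \ {j}`. -/
theorem div_add_div_le_add_div_of_le_mul {a b A B m : ℝ} (ha : 0 ≤ a) (hb : 0 < b) (hm : 0 < m)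
    (hA0 : 0 ≤ A) (hA : A ≤ m * a) (hBm : B ≤ m * b) (hBb : B ≤ b ^ 2) :
    B / b + (A + m ^ 2) / (a + m) ≤ m + (B + A) / (b + a) := by
  rw [div_add_div _ _ hb.ne' (by positivity), add_div' _ _ _ (by positivity),
    div_le_div_iff₀ (by positivity) (by positivity)]
  rcases le_total m b with h | h
  · nlinarith [mul_nonneg (mul_nonneg (sub_nonneg.2 hA) hb.le) (sub_nonneg.2 h),
      mul_nonneg (sub_nonneg.2 hBm) (mul_nonneg ha (add_nonneg ha hm.le))]
  · nlinarith [mul_nonneg (mul_nonneg hA0 hb.le) (sub_nonneg.2 h),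
      mul_nonneg (sub_nonneg.2 hBb) (mul_nonneg ha (add_nonneg ha hm.le)),
      mul_nonneg (mul_nonneg hb.le (sq_nonneg a)) (sub_nonneg.2 h)]

theorem costw_erase_add_costw_singleton_le_of_mem_left [DecidableEq ι] {μ σ2 : ℝ} (hσ : 0 ≤ σ2)
    {n : ι → ℕ} (hn : ∀ i, 0 < n i) {P Q : Finset ι} (hQ : Q.Nonempty) (hdisj : Disjoint P Q)
    {j : ι} (hjP : j ∈ P) (hjmax : ∀ i ∈ P ∪ Q, n i ≤ n j) :
    costw μ σ2 n ((Q ∪ P).erase j) + costw μ σ2 n {j} ≤ costw μ σ2 n Q + costw μ σ2 n P := by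
  have hj : j ∈ Q ∪ P := mem_union_right Q hjP
  have hle : ∀ i ∈ P ∪ Q, (n i : ℝ) ≤ n j := fun i hi => by exact_mod_cast hjmax i hi
  set m : ℝ := (n j : ℝ)
  set a := ∑ i ∈ P.erase j, (n i : ℝ)
  set A := ∑ i ∈ P.erase j, (n i : ℝ) ^ 2
  set b := ∑ i ∈ Q, (n i : ℝ)
  set B := ∑ i ∈ Q, (n i : ℝ) ^ 2
  have hm : 0 < m := Nat.cast_pos.2 (hn j)
  have ha : 0 ≤ a := sum_nonneg fun i _ => Nat.cast_nonneg _
  have hb : 0 < b := sum_pos (fun i _ => by exact_mod_cast hn i) hQ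
  have hA0 : 0 ≤ A := sum_nonneg fun i _ => by positivity
  have hA : A ≤ m * a := sum_sq_le_mul_sum (fun i _ => Nat.cast_nonneg _)
    fun i hi => hle i (mem_union_left Q (mem_of_mem_erase hi))
  have hBm : B ≤ m * b := sum_sq_le_mul_sum (fun i _ => Nat.cast_nonneg _)
    fun i hi => hle i (mem_union_right P hi)
  have hBb : B ≤ b ^ 2 := sum_sq_le_sq_sum_of_nonneg fun i _ => Nat.cast_nonneg _
  have hP1 : ∑ i ∈ P, (n i : ℝ) = a + m := (sum_erase_add P _ hjP).symm
  have hP2 : ∑ i ∈ P, (n i : ℝ) ^ 2 = A + m ^ 2 := (sum_erase_add P _ hjP).symm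
  have hR1 : ∑ i ∈ (Q ∪ P).erase j, (n i : ℝ) = b + a := by
    rw [sum_erase_eq_sub hj, sum_union hdisj.symm, hP1]; ring
  have hR2 : ∑ i ∈ (Q ∪ P).erase j, (n i : ℝ) ^ 2 = B + A := by
    rw [sum_erase_eq_sub hj, sum_union hdisj.symm, hP2]; ring
  rw [costw_eq μ σ2 n (by rw [hR1]; positivity), costw_singleton μ σ2 (hn j),
    costw_eq μ σ2 n hb.ne', costw_eq μ σ2 n (by rw [hP1]; positivity), hR1, hR2, hP1, hP2]
  have key := mul_le_mul_of_nonneg_left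
    (div_add_div_le_add_div_of_le_mul ha hb hm hA0 hA hBm hBb) hσ
  linarith

theorem merge_and_remove_largest_general [DecidableEq ι] (μ σ2 : ℝ) (n : ι → ℕ)
    (hσ : 0 < σ2) (hn : ∀ i, 0 < n i)
    (P Q : Finset ι) (hP : P.Nonempty) (hQ : Q.Nonempty) (hdisj : Disjoint P Q)
    (j : ι) (hj : j ∈ P ∪ Q) (hjmax : ∀ i ∈ P ∪ Q, n i ≤ n j) :
    costw μ σ2 n Q + costw μ σ2 n P ≥
      costw μ σ2 n ((Q ∪ P).erase j) + costw μ σ2 n {j} := by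
  rcases mem_union.1 hj with hjP | hjQ
  · exact costw_erase_add_costw_singleton_le_of_mem_left hσ.le hn hQ hdisj hjP hjmax
  · rw [union_comm, add_comm (costw μ σ2 n Q)]
    exact costw_erase_add_costw_singleton_le_of_mem_left hσ.le hn hP hdisj.symm hjQ
      (by rwa [union_comm])

/-- (Key merging inequality.)  Let `P` and `Q` be disjoint nonempty coalitions and let
`j ∈ P ∪ Q` have a maximal number of samples among the players of `P ∪ Q`, with
`P ∪ Q` containing at least two players.  Then merging the two groups and removing `j`
to local learning does not increase total cost:
`costw Q + costw P ≥ costw ((Q ∪ P) \ {j}) + costw {j}`. -/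
theorem merge_and_remove_largest [DecidableEq ι] (μ σ2 : ℝ) (n : ι → ℕ)
    (hμ : 0 < μ) (hσ : 0 < σ2) (hn : ∀ i, 0 < n i)
    (P Q : Finset ι) (hP : P.Nonempty) (hQ : Q.Nonempty) (hdisj : Disjoint P Q)
    (j : ι) (hj : j ∈ P ∪ Q) (hjmax : ∀ i ∈ P ∪ Q, n i ≤ n j)
    (hcard : 2 ≤ (P ∪ Q).card) :
    costw μ σ2 n Q + costw μ σ2 n P ≥
      costw μ σ2 n ((Q ∪ P).erase j) + costw μ σ2 n {j} :=
  merge_and_remove_largest_general μ σ2 n hσ hn P Q hP hQ hdisj j hj hjmax
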